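/- Dual (Lagrange multiplier) representation of the empirical likelihood ratio. Let g_1, …, g_N ∈ ℝ^p (N ≥ p) and suppose 0 lies in the interior of the convex hull of {g_1, …, g_N}. Then there exists β ∈ ℝ^p with 1 + β'g_k > 0 for all k = 1, …, N satisfying N^{−1}Σ_{k=1}^N g_k/(1 + β'g_k) = 0, such that the weights p_k = [N(1 + β'g_k)]^{−1} are strictly positive, sum to 1, satisfy Σ_{k=1}^N p_k g_k = 0, and maximize Π_{k=1}^N p_k over all probability vectors (p_1,…,p_N) with p_k ≥ 0, Σp_k = 1, Σp_k g_k = 0. Consequently, sup{Π_{k=1}^N p_k : Σp_k = 1, p_k ≥ 0, Σ_k p_k g_k = 0} = N^{−N} Π_{k=1}^N (1 + β'g_k)^{−1}, i.e., the empirical likelihood ratio R = sup{Π p_k}/N^{−N} equals Π_{k=1}^N (1 + β'g_k)^{−1}. -/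

import Mathlib

open MeasureTheory Filter Matrix Finset
open scoped Classical BigOperators Topology

noncomputable section

/-- Euclidean dot product on `Fin m → ℝ`. -/
def dotv {m : ℕ} (x y : Fin m → ℝ) : ℝ := ∑ i, x i * y i

/-- Euclidean norm on `Fin m → ℝ`. -/
def vnorm {m : ℕ} (x : Fin m → ℝ) : ℝ := Real.sqrt (∑ i, x i ^ 2)

/-- ℓ¹ norm on `Fin m → ℝ`. -/
def l1norm {m : ℕ} (x : Fin m → ℝ) : ℝ := ∑ i, |x i|

/-- Frobenius norm of a real square matrix. -/
def normM {m : ℕ} (A : Matrix (Fin m) (Fin m) ℝ) : ℝ := Real.sqrt (∑ i, ∑ j, (A i j) ^ 2)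

/-- Frobenius norm of a complex square matrix. -/
def cnormM {m : ℕ} (A : Matrix (Fin m) (Fin m) ℂ) : ℝ :=
  Real.sqrt (∑ i, ∑ j, (‖A i j‖) ^ 2)

/-- The cube `a (j + [0,1)^d)`. -/
def cube (d : ℕ) (a : ℝ) (j : Fin d → ℤ) : Set (Fin d → ℝ) :=
  Set.univ.pi fun i => Set.Ico (a * (j i : ℝ)) (a * ((j i : ℝ) + 1))

/-- Chi-squared distribution with `p` degrees of freedom, as a Gamma(p/2, 1/2) law. -/
def chiSq (p : ℕ) : Measure ℝ := ProbabilityTheory.gammaMeasure ((p : ℝ) / 2) (1 / 2)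

/-- The standard Gaussian on `Fin p → ℝ` (independent standard normal coordinates). -/
def stdGauss (p : ℕ) : Measure (Fin p → ℝ) :=
  Measure.pi fun _ => ProbabilityTheory.gaussianReal 0 1

/-- The SFDEL setup: a zero-mean second-order stationary random field `Z` on `ℝ^d` with
autocovariance `scov` and spectral density `phi`, sampled at the random sites
`s_i = λ_n X_i` where the `X_i` are i.i.d. with density `f` supported on `cl D0`,
together with the frequency-grid parameters `kap = κ`, `eta = η`, `Cs = C*`, the
(spectral) estimating function `G = G_{θ0}`, and the mixing data `gam1, gam2, del`. -/
structure SFDEL (d p : ℕ) (ΩZ ΩX : Type)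
    [MeasurableSpace ΩZ] [MeasurableSpace ΩX] where
  /-- law of the random field -/
  PZ : Measure ΩZ
  /-- law of the sampling design -/
  PX : Measure ΩX
  probZ : IsProbabilityMeasure PZ
  probX : IsProbabilityMeasure PX
  /-- the random field -/
  Z : (Fin d → ℝ) → ΩZ → ℝ
  /-- the design sequence -/
  X : ℕ → ΩX → (Fin d → ℝ)
  /-- spatial sampling density -/
  f : (Fin d → ℝ) → ℝ
  /-- prototype sampling region -/
  D0 : Set (Fin d → ℝ)
  /-- scaling factors λ_n -/
  lam : ℕ → ℝ
  /-- autocovariance function σ(·) -/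
  scov : (Fin d → ℝ) → ℝ
  /-- spectral density φ -/
  phi : (Fin d → ℝ) → ℝ
  /-- grid spacing exponent κ -/
  kap : ℝ
  /-- grid range exponent η -/
  eta : ℝ
  /-- grid range constant C* -/
  Cs : ℝ
  /-- the estimating function `G_{θ0}` -/
  G : (Fin d → ℝ) → (Fin p → ℝ)
  /-- mixing bound γ₁ -/
  gam1 : ℝ → ℝ
  /-- mixing bound γ₂ -/
  gam2 : ℝ → ℝ
  /-- moment index δ -/
  del : ℝ
  -- measurability
  meas_Z : Measurable (Function.uncurry Z)
  meas_X : ∀ i, Measurable (X i)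
  meas_f : Measurable f
  meas_phi : Measurable phi
  meas_G : Measurable G
  -- sampling design: i.i.d. with density f supported on cl D0
  X_indep : ProbabilityTheory.iIndepFun X PX
  X_law : ∀ i, PX.map (X i) = (volume : Measure (Fin d → ℝ)).withDensity
      (fun x => ENNReal.ofReal (f x))
  f_nonneg : ∀ x, 0 ≤ f x
  f_supp : ∀ x ∉ closure D0, f x = 0
  f_int : ∫ x, f x = 1
  f_sq_int : Integrable (fun x => (f x) ^ 2)
  -- the prototype region D0
  D0_open : IsOpen D0
  D0_conn : IsConnected D0
  D0_zero : (0 : Fin d → ℝ) ∈ D0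
  D0_sub : D0 ⊆ Set.univ.pi fun _ => Set.Ioc (-(1/2) : ℝ) (1/2)
  D0_boundary : ∀ a : ℕ → ℝ, (∀ n, 0 < a n) → Tendsto a atTop (𝓝 0) →
    ∃ C : ℝ, ∀ᶠ n in atTop,
      (Set.ncard {j : Fin d → ℤ |
          (cube d (a n) j ∩ D0).Nonempty ∧ (cube d (a n) j ∩ D0ᶜ).Nonempty} : ℝ)
        ≤ C * (a n) ^ (-((d : ℝ) - 1))
  -- the scaling factors
  lam_ge_one : ∀ n, 1 ≤ lam n
  lam_mono : Monotone lam
  lam_top : Tendsto lam atTop atTop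
  lam_poly : ∃ ε > (0 : ℝ), Tendsto (fun n => lam n / (n : ℝ) ^ ε) atTop atTop
  -- the random field: zero mean, second-order stationary, with spectral density phi
  Z_mean : ∀ s, ∫ ω, Z s ω ∂PZ = 0
  Z_sq_int : ∀ s t, Integrable (fun ω => Z s ω * Z t ω) PZ
  Z_stat : ∀ s h, ∫ ω, Z (s + h) ω * Z s ω ∂PZ = scov h
  phi_nonneg : ∀ x, 0 ≤ phi x
  phi_int : Integrable phi
  spec_rep : ∀ h : Fin d → ℝ,
    (scov h : ℂ) = ∫ ω : Fin d → ℝ, Complex.exp (Complex.I * (dotv ω h : ℂ)) * (phi ω : ℂ)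
  -- grid parameters
  kap_pos : 0 < kap
  kap_lt_one : kap < 1
  kap_le_eta : kap ≤ eta
  Cs_pos : 0 < Cs

namespace SFDEL

variable {d p : ℕ} {ΩZ ΩX : Type} [MeasurableSpace ΩZ] [MeasurableSpace ΩX]
variable (S : SFDEL d p ΩZ ΩX)

/-- The data sites `s_i = λ_n X_i`. -/
def site (n i : ℕ) (ωX : ΩX) : Fin d → ℝ := fun k => S.lam n * S.X i ωX k

/-- `c_n = n / λ_n^d`. -/
def cn (n : ℕ) : ℝ := (n : ℝ) / S.lam n ^ d

/-- The discrete Fourier transform `d_n(ω)`. -/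
def dft (n : ℕ) (ω : Fin d → ℝ) (ωZ : ΩZ) (ωX : ΩX) : ℂ :=
  ((S.lam n ^ ((d : ℝ) / 2) / (n : ℝ) : ℝ) : ℂ) *
    ∑ j ∈ Finset.range n,
      (S.Z (S.site n j ωX) ωZ : ℂ) * Complex.exp (Complex.I * (dotv ω (S.site n j ωX) : ℂ))

/-- The periodogram `I_n(ω) = |d_n(ω)|²`. -/
def perio (n : ℕ) (ω : Fin d → ℝ) (ωZ : ΩZ) (ωX : ΩX) : ℝ :=
  (‖S.dft n ω ωZ ωX‖) ^ 2

/-- The sample mean `Z̄_n`. -/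
def zbar (n : ℕ) (ωZ : ΩZ) (ωX : ΩX) : ℝ :=
  (n : ℝ)⁻¹ * ∑ i ∈ Finset.range n, S.Z (S.site n i ωX) ωZ

/-- The sample variance `σ̂_n(0)`. -/
def sigHat (n : ℕ) (ωZ : ΩZ) (ωX : ΩX) : ℝ :=
  (n : ℝ)⁻¹ * ∑ i ∈ Finset.range n, (S.Z (S.site n i ωX) ωZ - S.zbar n ωZ ωX) ^ 2

/-- The bias-corrected periodogram `Ĩ_n(ω) = I_n(ω) − n⁻¹λ_n^d σ̂_n(0)`. -/
def perioT (n : ℕ) (ω : Fin d → ℝ) (ωZ : ΩZ) (ωX : ΩX) : ℝ :=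
  S.perio n ω ωZ ωX - (S.lam n ^ d / (n : ℝ)) * S.sigHat n ωZ ωX

/-- `I_n^*(ω) = I_n(ω) − c_n⁻¹ σ(0)`. -/
def perioS (n : ℕ) (ω : Fin d → ℝ) (ωZ : ΩZ) (ωX : ΩX) : ℝ :=
  S.perio n ω ωZ ωX - (S.cn n)⁻¹ * S.scov 0

/-- `K = (2π)^d ∫ f²`. -/
def K : ℝ := (2 * Real.pi) ^ d * ∫ x, (S.f x) ^ 2

/-- `A_n(ω) = c_n⁻¹ σ(0) + K φ(ω)`. -/
def A (n : ℕ) (ω : Fin d → ℝ) : ℝ := (S.cn n)⁻¹ * S.scov 0 + S.K * S.phi ω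

/-- The integer index set of the frequency grid:
`j ∈ ℤ^d` with `j ∈ [−C*λ_n^η, C*λ_n^η]^d`. -/
def grid (n : ℕ) : Finset (Fin d → ℤ) :=
  Fintype.piFinset fun _ =>
    Finset.Icc ⌈-(S.Cs * S.lam n ^ S.eta)⌉ ⌊S.Cs * S.lam n ^ S.eta⌋

/-- The grid frequency `ω = λ_n^{−κ} j`. -/
def freq (n : ℕ) (j : Fin d → ℤ) : Fin d → ℝ := fun i => S.lam n ^ (-S.kap) * (j i : ℝ)

/-- `N = |𝒩_n|`, the number of grid frequencies. -/
def Nn (n : ℕ) : ℕ := (S.grid n).card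

/-- `b_n² = N c_n^{−2} + λ_n^{κ d}`. -/
def b2 (n : ℕ) : ℝ := (S.Nn n : ℝ) / S.cn n ^ 2 + S.lam n ^ (S.kap * d)

/-- `Σ_n = 2 Σ_k G(ω_k) G(ω_k)' A_n²(ω_k)`. -/
def Smat (n : ℕ) : Matrix (Fin p) (Fin p) ℝ :=
  (2 : ℝ) • ∑ j ∈ S.grid n,
    (S.A n (S.freq n j)) ^ 2 • Matrix.vecMulVec (S.G (S.freq n j)) (S.G (S.freq n j))

/-- `N⁻¹ Σ_k G(ω_k) G(ω_k)'`. -/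
def Gmat (n : ℕ) : Matrix (Fin p) (Fin p) ℝ :=
  ((S.Nn n : ℝ))⁻¹ • ∑ j ∈ S.grid n,
    Matrix.vecMulVec (S.G (S.freq n j)) (S.G (S.freq n j))

/-- The SFDEL likelihood `L_n(θ0)` (equal to `0` when the constraint set is empty,
using `Real.sSup ∅ = 0`). -/
def EL (n : ℕ) (ωZ : ΩZ) (ωX : ΩX) : ℝ :=
  sSup {r : ℝ | ∃ w : (Fin d → ℤ) → ℝ,
    (∀ j ∈ S.grid n, 0 ≤ w j) ∧ (∑ j ∈ S.grid n, w j) = 1 ∧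
    (∀ i : Fin p, ∑ j ∈ S.grid n,
        w j * (S.G (S.freq n j) i * S.perioT n (S.freq n j) ωZ ωX) = 0) ∧
    r = ∏ j ∈ S.grid n, w j}

/-- The SFDEL ratio statistic `R_n(θ0) = L_n(θ0)/N^{−N}`. -/
def Rstat (n : ℕ) (ωZ : ΩZ) (ωX : ΩX) : ℝ :=
  (S.Nn n : ℝ) ^ (S.Nn n) * S.EL n ωZ ωX

/-- The data-based scaling factor `a_n(θ0)`. -/
def an (n : ℕ) (ωZ : ΩZ) (ωX : ΩX) : ℝ :=
  (∑ j ∈ S.grid n, (∑ i, (S.G (S.freq n j) i) ^ 2) * (S.perioT n (S.freq n j) ωZ ωX) ^ 2) /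
  (∑ j ∈ S.grid n, (∑ i, (S.G (S.freq n j) i) ^ 2) * (S.perio n (S.freq n j) ωZ ωX) ^ 2)

/-- `F_n(θ0, β)`, the estimating function of the Lagrange-multiplier dual problem. -/
def Fdual (n : ℕ) (β : Fin p → ℝ) (ωZ : ΩZ) (ωX : ΩX) : Fin p → ℝ := fun i =>
  ((S.Nn n : ℝ))⁻¹ * ∑ j ∈ S.grid n,
    (S.G (S.freq n j) i * S.perioT n (S.freq n j) ωZ ωX) /
      (1 + dotv β (S.perioT n (S.freq n j) ωZ ωX • S.G (S.freq n j)))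

/-- `J_n = N⁻¹ Σ_k G(ω_k) Ĩ_n(ω_k)`. -/
def Jv (n : ℕ) (ωZ : ΩZ) (ωX : ΩX) : Fin p → ℝ :=
  ((S.Nn n : ℝ))⁻¹ • ∑ j ∈ S.grid n, S.perioT n (S.freq n j) ωZ ωX • S.G (S.freq n j)

/-- `W_n = N⁻¹ Σ_k G(ω_k) G(ω_k)' Ĩ_n²(ω_k)`. -/
def Wm (n : ℕ) (ωZ : ΩZ) (ωX : ΩX) : Matrix (Fin p) (Fin p) ℝ :=
  ((S.Nn n : ℝ))⁻¹ • ∑ j ∈ S.grid n,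
    (S.perioT n (S.freq n j) ωZ ωX) ^ 2 •
      Matrix.vecMulVec (S.G (S.freq n j)) (S.G (S.freq n j))

/-- The σ-field generated by `{Z(s) : s ∈ E}`. -/
def sigmaZ (E : Set (Fin d → ℝ)) : MeasurableSpace ΩZ :=
  ⨆ s ∈ E, MeasurableSpace.comap (S.Z s) inferInstance

/-- The strong mixing coefficient `α(a; b)` over pairs of rectangles of volume `≤ b`
at ℓ¹-distance `≥ a`. -/
def mixCoef (a b : ℝ) : ℝ :=
  sSup {x : ℝ | ∃ l1 u1 l2 u2 : Fin d → ℝ,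
    (∏ i, (u1 i - l1 i)) ≤ b ∧ (∏ i, (u2 i - l2 i)) ≤ b ∧
    (∀ y ∈ Set.univ.pi fun i => Set.Icc (l1 i) (u1 i),
      ∀ z ∈ Set.univ.pi fun i => Set.Icc (l2 i) (u2 i), a ≤ l1norm (y - z)) ∧
    ∃ A1, MeasurableSet[S.sigmaZ (Set.univ.pi fun i => Set.Icc (l1 i) (u1 i))] A1 ∧
    ∃ A2, MeasurableSet[S.sigmaZ (Set.univ.pi fun i => Set.Icc (l2 i) (u2 i))] A2 ∧
    x = |(S.PZ (A1 ∩ A2)).toReal - (S.PZ A1).toReal * (S.PZ A2).toReal|}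

/-- Condition (C.0): the strong mixing coefficient is bounded by `γ₁(a)γ₂(b)` with
`γ₁` left-continuous nonincreasing and `γ₂` right-continuous nondecreasing positive. -/
def C0 : Prop :=
  (∀ x, 0 ≤ S.gam1 x) ∧ AntitoneOn S.gam1 (Set.Ioi 0) ∧
  (∀ x > (0 : ℝ), ContinuousWithinAt S.gam1 (Set.Iio x) x) ∧
  (∀ x > (0 : ℝ), 0 < S.gam2 x) ∧ MonotoneOn S.gam2 (Set.Ioi 0) ∧
  (∀ x > (0 : ℝ), ContinuousWithinAt S.gam2 (Set.Ioi x) x) ∧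
  (∀ a > (0 : ℝ), ∀ b > (0 : ℝ), S.mixCoef a b ≤ S.gam1 a * S.gam2 b)

/-- Condition (C.1): uniform `4+δ` moments and summable mixing rates. -/
def C1 : Prop :=
  (0 < S.del ∧ S.del ≤ 1) ∧
  (∀ s, Integrable (fun ω => |S.Z s ω| ^ (4 + S.del)) S.PZ) ∧
  (∃ M : ℝ, ∀ s, ∫ ω, |S.Z s ω| ^ (4 + S.del) ∂S.PZ ≤ M) ∧
  Summable (fun k : ℕ => (k : ℝ) ^ (3 * d) * S.gam1 k ^ (S.del / (4 + S.del)))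

/-- Condition (C.2): `f` is positive and Lipschitz on `D0` and the characteristic
functions of `f` and `f²` decay at rate `‖ω‖^{−a₀}` for some `a₀ ∈ (d/2, d]`. -/
def C2 : Prop :=
  (∀ x ∈ S.D0, 0 < S.f x) ∧
  (∃ C0 : ℝ, ∀ x ∈ S.D0, ∀ y ∈ S.D0, |S.f x - S.f y| ≤ C0 * vnorm (x - y)) ∧
  ∃ C1 > (0 : ℝ), ∃ a0 : ℝ, (d : ℝ) / 2 < a0 ∧ a0 ≤ d ∧
    ∀ ω : Fin d → ℝ, C1 < vnorm ω →
      ‖∫ x : Fin d → ℝ, Complex.exp (Complex.I * (dotv ω x : ℂ)) * (S.f x : ℂ)‖ +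
      ‖∫ x : Fin d → ℝ,
          Complex.exp (Complex.I * (dotv ω x : ℂ)) * ((S.f x : ℂ)) ^ 2‖
        ≤ C1 * vnorm ω ^ (-a0)

/-- Condition (C.3)(i): `G_{θ0}` is bounded, symmetric, a.e. continuous, and satisfies
the spectral moment condition `∫ G_{θ0} φ = 0`. -/
def C3i : Prop :=
  (∃ B : ℝ, ∀ ω, vnorm (S.G ω) ≤ B) ∧
  (∀ ω, S.G (-ω) = S.G ω) ∧
  (∀ᵐ ω ∂(volume : Measure (Fin d → ℝ)), ContinuousAt S.G ω) ∧
  (∀ i, ∫ ω : Fin d → ℝ, S.G ω i * S.phi ω = 0)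

/-- Condition (C.3)(ii): tail bound on the spectral density. -/
def C3ii : Prop :=
  ∃ C2 : ℝ, ∃ h : ℝ → ℝ, AntitoneOn h (Set.Ici 0) ∧
    ∀ ω : Fin d → ℝ, C2 < vnorm ω → |S.phi ω| ≤ h (vnorm ω)

/-- Condition (C.3)(iii): `liminf det(N⁻¹ Σ_k G G') > 0`. -/
def C3iii : Prop := 0 < Filter.liminf (fun n => (S.Gmat n).det) atTop

/-- Condition (C.3)(iv): `∫ G G' φ²` is nonsingular. -/
def C3iv : Prop :=
  IsUnit (Matrix.det (Matrix.of fun i i' : Fin p =>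
    ∫ ω : Fin d → ℝ, S.G ω i * S.G ω i' * (S.phi ω) ^ 2))

/-- Condition (C.3). -/
def C3 : Prop := S.C3i ∧ S.C3ii ∧ S.C3iii ∧ S.C3iv

/-- Condition (C.4): `0 < κ < η < 1`, and the CLT
`Σ_n^{−1/2} Σ_k G(ω_k) I_n^*(ω_k) →d N(0, I_p)` (conditionally on the design,
for `P_X`-almost every design realization), where `Σ_n^{−1/2}` is the symmetric
matrix square root of `Σ_n⁻¹`. -/
def C4 : Prop :=
  (0 < S.kap ∧ S.kap < S.eta ∧ S.eta < 1) ∧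
  ∃ Sroot : ℕ → Matrix (Fin p) (Fin p) ℝ,
    (∀ᶠ n in atTop, (Sroot n).IsSymm ∧ Sroot n * S.Smat n * Sroot n = 1) ∧
    (∀ᵐ ωX ∂S.PX, ∀ g : BoundedContinuousFunction (Fin p → ℝ) ℝ,
      Tendsto (fun n => ∫ ωZ, g ((Sroot n).mulVec
          (∑ j ∈ S.grid n, S.perioS n (S.freq n j) ωZ ωX • S.G (S.freq n j))) ∂S.PZ)
        atTop (𝓝 (∫ v, g v ∂(stdGauss p))))

/-- Condition (C.5)': domination of the matrix exponential sums
`Σ_k G(ω_k)G(ω_k)' e^{i t'ω_k}` by functions `M_n` with the stated `o(·)` growth of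
their double `ν ⊗ ν` integrals. -/
def C5' : Prop :=
  ∃ M : ℕ → (Fin d → ℝ) → ℝ,
    (∀ n t, 0 ≤ M n t) ∧
    (∀ n, ∀ t : Fin d → ℝ,
      cnormM (Matrix.of fun i i' : Fin p => ∑ j ∈ S.grid n,
        ((S.G (S.freq n j) i * S.G (S.freq n j) i' : ℝ) : ℂ) *
          Complex.exp (Complex.I * (dotv t (S.freq n j) : ℂ))) ≤ M n t) ∧
    ∀ a1 a2 a3 : ℝ, a1 ∈ ({0, 1} : Set ℝ) → a2 ∈ ({0, 1} : Set ℝ) → a3 ∈ ({0, 1} : Set ℝ) →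
      Tendsto (fun n =>
        (∫ q : ((Fin d → ℝ) × (Fin d → ℝ)) × ((Fin d → ℝ) × (Fin d → ℝ)),
          M n (q.1.1 + a1 • (q.2.1 + (2 * S.lam n * a2) • q.1.2 + (2 * S.lam n * a3) • q.2.2)) *
            (vnorm q.1.1 * S.gam1 (vnorm q.1.1) ^ (S.del / (4 + S.del)) * S.f q.1.2) *
            (vnorm q.2.1 * S.gam1 (vnorm q.2.1) ^ (S.del / (4 + S.del)) * S.f q.2.2)) /
          (S.b2 n * S.cn n ^ ((1 : ℝ) - a1) * S.lam n ^ ((1 : ℝ) + a1)))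
        atTop (𝓝 0)

end SFDEL

/-!
The product `∏ q_k` attains its maximum on the compact feasible polytope, and the maximiser is
strictly positive because `0 ∈ interior (convexHull (range g))` provides a strictly positive
feasible vector. At a positive maximiser `∑ log q_k` is stationary along every feasible direction
`v` (`∑ v_k = 0`, `∑ v_k g_k = 0`), so `(1 / q_k)_k` annihilates the kernel of
`v ↦ (∑ v_k, ∑ v_k g_k)` and is therefore of the form `1 / q_k = a + φ (g_k)` for a scalar `a`
and a linear functional `φ`. Multiplying by `q_k` and summing over the constraints gives `a = N`,
that is `q_k = [N (1 + β'g_k)]⁻¹` with `β'x = φ x / N`.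
-/

section EmpiricalLikelihood

variable {ι E : Type*} [Fintype ι]

theorem mem_convexHull_range_iff_exists_stdSimplex {R : Type*} [Field R] [LinearOrder R]
    [IsStrictOrderedRing R] [AddCommGroup E] [Module R E] {g : ι → E} {x : E} :
    x ∈ convexHull R (Set.range g) ↔ ∃ w ∈ stdSimplex R ι, ∑ k, w k • g k = x := by
  classical
  have hg : Set.range g = Fintype.linearCombination R g '' Set.range fun k => Pi.single k 1 := by
    rw [← Set.range_comp]
    congr 1
    ext k
    simp [Fintype.linearCombination_apply, Pi.single_apply]
  rw [hg, ← LinearMap.image_convexHull, convexHull_rangle_single_eq_stdSimplex]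
  simp [Fintype.linearCombination_apply]

theorem exists_pos_weights_of_zero_mem_interior_convexHull [AddCommGroup E] [Module ℝ E]
    [TopologicalSpace E] [ContinuousSMul ℝ E] {g : ι → E}
    (h : (0 : E) ∈ interior (convexHull ℝ (Set.range g))) :
    ∃ w : ι → ℝ, (∀ k, 0 < w k) ∧ ∑ k, w k = 1 ∧ ∑ k, w k • g k = 0 := by
  have : Nonempty ι := (isEmpty_or_nonempty ι).resolve_left fun _ => by
    simp [Set.range_eq_empty] at h
  set n : ℝ := (Fintype.card ι : ℝ)
  have hn : 0 < n := by positivity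
  set c : E := n⁻¹ • ∑ k, g k
  have hnear : ∀ᶠ t in 𝓝 (0 : ℝ), -t • c ∈ convexHull ℝ (Set.range g) :=
    ((continuous_neg.smul continuous_const).tendsto' (0 : ℝ) (0 : E) (by simp)).eventually
      (mem_interior_iff_mem_nhds.1 h)
  obtain ⟨t, ht, ht_pos : 0 < t⟩ :=
    ((hnear.filter_mono nhdsWithin_le_nhds).and (self_mem_nhdsWithin (s := Set.Ioi 0))).exists
  obtain ⟨μ, hμ, hμg⟩ := mem_convexHull_range_iff_exists_stdSimplex.1 ht
  -- `0` is a convex combination of `-t • c` and of the barycentre `c`, which has uniform weights.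
  refine ⟨fun k => (1 + t)⁻¹ * (μ k + t * n⁻¹), fun k => ?_, ?_, ?_⟩
  · have := hμ.1 k
    positivity
  · rw [← Finset.mul_sum, Finset.sum_add_distrib, hμ.2, Finset.sum_const, Finset.card_univ,
      nsmul_eq_mul, mul_left_comm, mul_inv_cancel₀ hn.ne', mul_one, inv_mul_cancel₀ (by positivity)]
  · simp only [mul_smul, add_smul, Finset.sum_add_distrib, ← Finset.smul_sum, hμg, c]
    rw [neg_smul, neg_add_cancel, smul_zero]

def elFeasibleSet [AddCommGroup E] [Module ℝ E] (g : ι → E) : Set (ι → ℝ) :=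
  stdSimplex ℝ ι ∩ {q | ∑ k, q k • g k = 0}

theorem exists_pos_isMaxOn_prod_elFeasibleSet [AddCommGroup E] [Module ℝ E]
    [TopologicalSpace E] [ContinuousAdd E] [ContinuousSMul ℝ E] [T1Space E] {g : ι → E}
    {w : ι → ℝ} (hw : w ∈ elFeasibleSet g) (hw_pos : ∀ k, 0 < w k) :
    ∃ q ∈ elFeasibleSet g, (∀ k, 0 < q k) ∧ IsMaxOn (fun q => ∏ k, q k) (elFeasibleSet g) q := by
  have hcompact : IsCompact (elFeasibleSet g) :=
    (isCompact_stdSimplex ℝ ι).inter_right <| isClosed_singleton.preimage <|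
      continuous_finsetSum _ fun k _ => (continuous_apply k).smul continuous_const
  obtain ⟨q, hq, hmax⟩ := hcompact.exists_isMaxOn ⟨w, hw⟩
    (continuous_finsetProd _ fun k _ => continuous_apply k).continuousOn
  refine ⟨q, hq, fun k => (hq.1.1 k).lt_of_ne' fun hqk => ?_, hmax⟩
  have hle : ∏ k, w k ≤ ∏ k, q k := hmax hw
  rw [Finset.prod_eq_zero (Finset.mem_univ k) hqk] at hle
  exact hle.not_gt (Finset.prod_pos fun k _ => hw_pos k)

theorem sum_div_eq_zero_of_isMaxOn_prod [AddCommGroup E] [Module ℝ E] {g : ι → E}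
    {q : ι → ℝ} (hq : q ∈ elFeasibleSet g) (hq_pos : ∀ k, 0 < q k)
    (hmax : IsMaxOn (fun q => ∏ k, q k) (elFeasibleSet g) q) {v : ι → ℝ}
    (hv : ∑ k, v k = 0) (hvg : ∑ k, v k • g k = 0) : ∑ k, v k / q k = 0 := by
  set f : ℝ → ℝ := fun t => ∑ k, Real.log (q k + t * v k)
  have hf : HasDerivAt f (∑ k, v k / q k) 0 := by
    have := HasDerivAt.fun_sum (u := Finset.univ) fun k _ =>
      (((hasDerivAt_id (0 : ℝ)).mul_const (v k)).const_add (q k)).log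
        (by simpa using (hq_pos k).ne')
    simpa using this
  refine IsLocalMax.hasDerivAt_eq_zero ?_ hf
  have hpos : ∀ᶠ t in 𝓝 (0 : ℝ), ∀ k, 0 < q k + t * v k :=
    eventually_all.2 fun k => Filter.Tendsto.eventually_const_lt (by simpa using hq_pos k)
      ((continuous_const.add (continuous_id.mul continuous_const)).tendsto' _ _ rfl)
  have hq₁ : ∑ k, q k = 1 := hq.1.2
  have hqg : ∑ k, q k • g k = 0 := hq.2
  filter_upwards [hpos] with t ht
  have hmem : q + t • v ∈ elFeasibleSet g := by
    refine ⟨⟨fun k => (ht k).le, ?_⟩, ?_⟩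
    · simp [Finset.sum_add_distrib, ← Finset.mul_sum, hq₁, hv]
    · simp [add_smul, mul_smul, Finset.sum_add_distrib, ← Finset.smul_sum, hqg, hvg]
  calc f t = Real.log (∏ k, (q k + t * v k)) := (Real.log_prod fun k _ => (ht k).ne').symm
    _ ≤ Real.log (∏ k, q k) :=
      Real.log_le_log (Finset.prod_pos fun k _ => ht k) (by simpa using hmax hmem)
    _ = f 0 := by simp [f, Real.log_prod fun k _ => (hq_pos k).ne']

theorem exists_eq_add_dual_of_forall_sum_mul_eq_zero {𝕜 : Type*} [Field 𝕜] [AddCommGroup E]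
    [Module 𝕜 E] {g : ι → E} {c : ι → 𝕜}
    (h : ∀ v : ι → 𝕜, ∑ k, v k = 0 → ∑ k, v k • g k = 0 → ∑ k, v k * c k = 0) :
    ∃ (a : 𝕜) (φ : Module.Dual 𝕜 E), ∀ k, c k = a + φ (g k) := by
  classical
  set A : (ι → 𝕜) →ₗ[𝕜] 𝕜 × E :=
    (Fintype.linearCombination 𝕜 fun _ => (1 : 𝕜)).prod (Fintype.linearCombination 𝕜 g)
  have hc : Fintype.linearCombination 𝕜 c ∈ LinearMap.range A.dualMap := by
    rw [LinearMap.range_dualMap_eq_dualAnnihilator_ker, Submodule.mem_dualAnnihilator]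
    intro v hv
    simp only [LinearMap.ker_prod, Submodule.mem_inf, LinearMap.mem_ker,
      Fintype.linearCombination_apply, smul_eq_mul, mul_one, A] at hv
    simpa only [Fintype.linearCombination_apply, smul_eq_mul] using h v hv.1 hv.2
  obtain ⟨ψ, hψ⟩ := hc
  refine ⟨ψ (1, 0), ψ ∘ₗ LinearMap.inr 𝕜 𝕜 E, fun k => ?_⟩
  have := LinearMap.congr_fun hψ (Pi.single k 1)
  simp only [LinearMap.dualMap_apply, LinearMap.prod_apply, Function.prod_apply,
    Fintype.linearCombination_apply, Pi.single_apply, ite_smul, one_smul, zero_smul, sum_ite_eq',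
    mem_univ, if_true, A] at this
  rw [← this, LinearMap.comp_apply, LinearMap.inr_apply, ← map_add, Prod.mk_add_mk, add_zero,
    zero_add]

theorem eq_card_of_inv_eq_add_dual [AddCommGroup E] [Module ℝ E] {g : ι → E} {q : ι → ℝ}
    (hq : q ∈ elFeasibleSet g) (hq_pos : ∀ k, 0 < q k) {a : ℝ} {φ : Module.Dual ℝ E}
    (hqφ : ∀ k, (q k)⁻¹ = a + φ (g k)) : a = Fintype.card ι := by
  have hq₁ : ∑ k, q k = 1 := hq.1.2
  have hqg : ∑ k, q k • g k = 0 := hq.2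
  have hk : ∀ k, q k * a + φ (q k • g k) = 1 := fun k => by
    rw [map_smul, smul_eq_mul, ← mul_add, ← hqφ k, mul_inv_cancel₀ (hq_pos k).ne']
  have hsum := Finset.sum_congr rfl fun k (_ : k ∈ Finset.univ) => hk k
  rw [Finset.sum_add_distrib, ← Finset.sum_mul, ← map_sum, hq₁, hqg, map_zero] at hsum
  simpa using hsum

theorem exists_dual_of_zero_mem_interior_convexHull [AddCommGroup E] [Module ℝ E]
    [TopologicalSpace E] [ContinuousAdd E] [ContinuousSMul ℝ E] [T1Space E] {g : ι → E}
    (h : (0 : E) ∈ interior (convexHull ℝ (Set.range g))) :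
    ∃ q ∈ elFeasibleSet g, (∀ k, 0 < q k) ∧
      IsMaxOn (fun q => ∏ k, q k) (elFeasibleSet g) q ∧
      ∃ ψ : Module.Dual ℝ E, ∀ k, q k = (Fintype.card ι * (1 + ψ (g k)))⁻¹ := by
  obtain ⟨w, hw_pos, hw₁, hwg⟩ := exists_pos_weights_of_zero_mem_interior_convexHull h
  obtain ⟨q, hq, hq_pos, hmax⟩ :=
    exists_pos_isMaxOn_prod_elFeasibleSet ⟨⟨fun k => (hw_pos k).le, hw₁⟩, hwg⟩ hw_pos
  obtain ⟨a, φ, hqφ⟩ := exists_eq_add_dual_of_forall_sum_mul_eq_zero (c := fun k => (q k)⁻¹)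
    fun v hv hvg => by
      simpa only [div_eq_mul_inv] using sum_div_eq_zero_of_isMaxOn_prod hq hq_pos hmax hv hvg
  have ha := eq_card_of_inv_eq_add_dual hq hq_pos hqφ
  have : Nonempty ι :=
    Finset.univ_nonempty_iff.1 <| Finset.nonempty_of_sum_ne_zero <| hw₁ ▸ one_ne_zero
  have hN : (Fintype.card ι : ℝ) ≠ 0 := by positivity
  refine ⟨q, hq, hq_pos, hmax, (Fintype.card ι : ℝ)⁻¹ • φ, fun k => ?_⟩
  rw [mul_add, mul_one, LinearMap.smul_apply, smul_eq_mul, mul_inv_cancel_left₀ hN, ← ha,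
    ← hqφ, inv_inv]

theorem mem_elFeasibleSet_pi_iff {κ : Type*} [Fintype κ] {g : ι → κ → ℝ} {q : ι → ℝ} :
    q ∈ elFeasibleSet g ↔ (∀ k, 0 ≤ q k) ∧ ∑ k, q k = 1 ∧ ∀ i, ∑ k, q k * g k i = 0 := by
  simp [elFeasibleSet, stdSimplex, funext_iff, Finset.sum_apply, and_assoc]

end EmpiricalLikelihood

theorem exists_dotv_eq {m : ℕ} (ψ : Module.Dual ℝ (Fin m → ℝ)) : ∃ β, ∀ x, dotv β x = ψ x :=
  ⟨fun i => ψ (Pi.single i 1), fun x => by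
    conv_rhs => rw [pi_eq_sum_univ' x]
    simp [dotv, mul_comm]⟩

theorem el_dual_representation_general {p N : ℕ} (g : Fin N → Fin p → ℝ)
    (hhull : (0 : Fin p → ℝ) ∈ interior (convexHull ℝ (Set.range g))) :
    ∃ β : Fin p → ℝ,
      (∀ k, 0 < 1 + dotv β (g k)) ∧
      (∀ i, (N : ℝ)⁻¹ * ∑ k, g k i / (1 + dotv β (g k)) = 0) ∧
      (∀ k, 0 < ((N : ℝ) * (1 + dotv β (g k)))⁻¹) ∧
      (∑ k, ((N : ℝ) * (1 + dotv β (g k)))⁻¹) = 1 ∧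
      (∀ i, ∑ k, ((N : ℝ) * (1 + dotv β (g k)))⁻¹ * g k i = 0) ∧
      (∀ q : Fin N → ℝ, (∀ k, 0 ≤ q k) → (∑ k, q k) = 1 →
        (∀ i, ∑ k, q k * g k i = 0) →
        ∏ k, q k ≤ ∏ k, ((N : ℝ) * (1 + dotv β (g k)))⁻¹) ∧
      sSup {r : ℝ | ∃ q : Fin N → ℝ, (∀ k, 0 ≤ q k) ∧ (∑ k, q k) = 1 ∧
          (∀ i, ∑ k, q k * g k i = 0) ∧ r = ∏ k, q k} =
        ((N : ℝ) ^ N)⁻¹ * ∏ k, (1 + dotv β (g k))⁻¹ := by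
  obtain ⟨q, hq, hq_pos, hmax, ψ, hqψ⟩ := exists_dual_of_zero_mem_interior_convexHull hhull
  obtain ⟨β, hβ⟩ := exists_dotv_eq ψ
  have hw : ∀ k, ((N : ℝ) * (1 + dotv β (g k)))⁻¹ = q k := fun k => by
    rw [hqψ k, hβ, Fintype.card_fin]
  obtain ⟨hq₀, hq₁, hqg⟩ := mem_elFeasibleSet_pi_iff.1 hq
  have hmax' : ∀ q' : Fin N → ℝ, (∀ k, 0 ≤ q' k) → ∑ k, q' k = 1 →
      (∀ i, ∑ k, q' k * g k i = 0) → ∏ k, q' k ≤ ∏ k, q k :=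
    fun q' h₀ h₁ hg => hmax (mem_elFeasibleSet_pi_iff.2 ⟨h₀, h₁, hg⟩)
  refine ⟨β, fun k => ?_, fun i => ?_, by simpa only [hw] using hq_pos,
    by simpa only [hw] using hq₁, by simpa only [hw] using hqg, by simpa only [hw] using hmax', ?_⟩
  · exact pos_of_mul_pos_right (inv_pos.1 ((hw k).symm ▸ hq_pos k)) (Nat.cast_nonneg N)
  · calc (N : ℝ)⁻¹ * ∑ k, g k i / (1 + dotv β (g k))
          = ∑ k, ((N : ℝ) * (1 + dotv β (g k)))⁻¹ * g k i := by
            rw [Finset.mul_sum]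
            exact Finset.sum_congr rfl fun k _ => by rw [mul_inv]; ring
        _ = 0 := by simpa only [hw] using hqg i
  · have hgreatest : IsGreatest {r : ℝ | ∃ q : Fin N → ℝ, (∀ k, 0 ≤ q k) ∧ (∑ k, q k) = 1 ∧
        (∀ i, ∑ k, q k * g k i = 0) ∧ r = ∏ k, q k} (∏ k, q k) :=
      ⟨⟨q, hq₀, hq₁, hqg, rfl⟩, by rintro r ⟨q', h₀, h₁, hg, rfl⟩; exact hmax' q' h₀ h₁ hg⟩
    rw [hgreatest.csSup_eq, ← Finset.prod_congr rfl fun k _ => hw k]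
    simp only [mul_inv, Finset.prod_mul_distrib, Finset.prod_const, Finset.card_univ,
      Fintype.card_fin, inv_pow]

/-- **Dual (Lagrange multiplier) representation of the empirical likelihood ratio.**
If `0` lies in the interior of the convex hull of `g_1, …, g_N ∈ ℝ^p` (`N ≥ p`), then
there is `β ∈ ℝ^p` with `1 + β'g_k > 0` for all `k` solving
`N⁻¹ Σ_k g_k/(1 + β'g_k) = 0`, such that the weights `p_k = [N(1 + β'g_k)]⁻¹` are
positive, sum to `1`, satisfy `Σ p_k g_k = 0`, maximize `Π p_k` over the constraint set,
and the empirical likelihood ratio equals `Π_k (1 + β'g_k)⁻¹`. -/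
theorem el_dual_representation {p N : ℕ} (hpN : p ≤ N) (g : Fin N → Fin p → ℝ)
    (hhull : (0 : Fin p → ℝ) ∈ interior (convexHull ℝ (Set.range g))) :
    ∃ β : Fin p → ℝ,
      (∀ k, 0 < 1 + dotv β (g k)) ∧
      (∀ i, (N : ℝ)⁻¹ * ∑ k, g k i / (1 + dotv β (g k)) = 0) ∧
      (∀ k, 0 < ((N : ℝ) * (1 + dotv β (g k)))⁻¹) ∧
      (∑ k, ((N : ℝ) * (1 + dotv β (g k)))⁻¹) = 1 ∧
      (∀ i, ∑ k, ((N : ℝ) * (1 + dotv β (g k)))⁻¹ * g k i = 0) ∧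
      (∀ q : Fin N → ℝ, (∀ k, 0 ≤ q k) → (∑ k, q k) = 1 →
        (∀ i, ∑ k, q k * g k i = 0) →
        ∏ k, q k ≤ ∏ k, ((N : ℝ) * (1 + dotv β (g k)))⁻¹) ∧
      sSup {r : ℝ | ∃ q : Fin N → ℝ, (∀ k, 0 ≤ q k) ∧ (∑ k, q k) = 1 ∧
          (∀ i, ∑ k, q k * g k i = 0) ∧ r = ∏ k, q k} =
        ((N : ℝ) ^ N)⁻¹ * ∏ k, (1 + dotv β (g k))⁻¹ :=
  el_dual_representation_general g hhull
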